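/- Let G₁ be a simple graph on a finite vertex set V, let e* be an unordered pair of distinct vertices of V that is not an edge of G₁, and let G₂ be the graph whose edge set is the edge set of G₁ together with e*. Then for every injective ranking π assigning distinct real values to all unordered pairs of distinct vertices of V, the greedy matchings satisfy | |M_π(G₁)| − |M_π(G₂)| | ≤ 1. -/

import Mathlib

/-!
Run the greedy algorithm on both graphs simultaneously, offering the edges in increasing rank,
and compare the sets of vertices covered so far. Before `e*` is offered the two runs agree.
Offering `e*` to the second run alone adds at most its two endpoints to the symmetric difference
of the covered sets, and offering an edge to both runs never enlarges that symmetric difference: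
if only one run accepts it, one of its endpoints was covered in the other run only. So the
covered sets end up differing in at most two vertices, and since a greedy matching is a matching,
it covers exactly twice as many vertices as it has edges.
-/

/-- `M` is the greedy matching of the graph `G` with respect to the ranking `π`:
an edge `e` of `G` belongs to `M` iff no edge `e'` of `G` sharing an endpoint with `e`
and of strictly smaller rank belongs to `M`. -/
def IsGreedyMatching {V : Type*} (G : SimpleGraph V) (π : Sym2 V → ℝ)
    (M : Set (Sym2 V)) : Prop :=
  ∀ e : Sym2 V, e ∈ M ↔ e ∈ G.edgeSet ∧
    ∀ e' ∈ G.edgeSet, (∃ v, v ∈ e ∧ v ∈ e') → π e' < π e → e' ∉ M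

open Set
open scoped symmDiff

section

variable {V : Type*}

def coveredVerts (M : Set (Sym2 V)) : Set V := {v | ∃ e ∈ M, v ∈ e}

open Classical in
/-- The covered vertices after offering the edge `s(x, y)` to the greedy algorithm, when `P` was
covered before. -/
noncomputable def coverStep (P : Set V) (x y : V) : Set V :=
  if x ∈ P ∨ y ∈ P then P else insert x (insert y P)

@[simp]
lemma coveredVerts_empty : coveredVerts (∅ : Set (Sym2 V)) = ∅ := by
  simp [coveredVerts]

lemma coveredVerts_insert (x y : V) (M : Set (Sym2 V)) :
    coveredVerts (insert s(x, y) M) = insert x (insert y (coveredVerts M)) := by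
  ext v
  simp only [coveredVerts, mem_ofPred_eq, mem_insert_iff, exists_eq_or_imp, Sym2.mem_iff]
  tauto

lemma ncard_coveredVerts_of_pairwise [Finite V] {M : Set (Sym2 V)}
    (hdiag : ∀ e ∈ M, ¬e.IsDiag) (hdisj : M.Pairwise fun e e' ↦ ∀ v ∈ e, v ∉ e') :
    (coveredVerts M).ncard = 2 * M.ncard := by
  induction M, M.toFinite using Set.Finite.induction_on with
  | empty => simp
  | @insert e M he _ ih =>
    obtain ⟨x, y⟩ := e
    have hxy : x ≠ y := hdiag _ (mem_insert _ _)
    have hfree : ∀ v ∈ s(x, y), v ∉ coveredVerts M := by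
      rintro v hv ⟨e', he', hv'⟩
      exact hdisj (mem_insert _ _) (mem_insert_of_mem _ he') (fun h ↦ he (h ▸ he')) v hv hv'
    have hx : x ∉ insert y (coveredVerts M) := by
      simp only [mem_insert_iff, not_or]
      exact ⟨hxy, hfree x (Sym2.mem_mk_left x y)⟩
    rw [coveredVerts_insert, ncard_insert_of_notMem hx,
      ncard_insert_of_notMem (hfree y (Sym2.mem_mk_right x y)), ncard_insert_of_notMem he,
      ih (fun e h ↦ hdiag e (mem_insert_of_mem _ h)) (hdisj.mono (subset_insert _ _))]
    ring

section SymmDiff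

variable [Finite V]

lemma ncard_le_ncard_add_ncard_symmDiff (P Q : Set V) : P.ncard ≤ Q.ncard + (P ∆ Q).ncard := by
  have hsub : (P \ Q).ncard ≤ (P ∆ Q).ncard := ncard_le_ncard fun _ h ↦ Or.inl h
  have := ncard_le_ncard_sdiff_add_ncard P Q
  omega

lemma ncard_symmDiff_insert_insert_le {P Q : Set V} {x y : V} (hP : x ∈ P ∨ y ∈ P)
    (hx : x ∉ Q) (hy : y ∉ Q) : (P ∆ insert x (insert y Q)).ncard ≤ (P ∆ Q).ncard := by
  wlog hxP : x ∈ P generalizing x y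
  · rw [insert_comm]
    exact this hP.symm hy hx (hP.resolve_left hxP)
  have hsub : P ∆ insert x (insert y Q) ⊆ insert y ((P ∆ Q) \ {x}) := by
    intro v hv
    simp only [mem_symmDiff, mem_insert_iff, mem_sdiff, mem_singleton_iff] at hv ⊢
    grind
  calc (P ∆ insert x (insert y Q)).ncard ≤ (insert y ((P ∆ Q) \ {x})).ncard := ncard_le_ncard hsub
    _ ≤ ((P ∆ Q) \ {x}).ncard + 1 := ncard_insert_le _ _
    _ = (P ∆ Q).ncard := ncard_sdiff_singleton_add_one (Or.inl ⟨hxP, hx⟩)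

lemma ncard_symmDiff_coverStep_le (P Q : Set V) (x y : V) :
    (coverStep P x y ∆ coverStep Q x y).ncard ≤ (P ∆ Q).ncard := by
  unfold coverStep
  split_ifs with hP hQ hQ
  · exact le_rfl
  · rw [not_or] at hQ
    exact ncard_symmDiff_insert_insert_le hP hQ.1 hQ.2
  · rw [not_or] at hP
    rw [symmDiff_comm, symmDiff_comm P]
    exact ncard_symmDiff_insert_insert_le hQ hP.1 hP.2
  · refine ncard_le_ncard fun v hv ↦ ?_
    simp only [mem_symmDiff, mem_insert_iff] at hv ⊢
    tauto

lemma ncard_symmDiff_coverStep_self_le (P : Set V) (x y : V) :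
    (P ∆ coverStep P x y).ncard ≤ 2 := by
  have hsub : P ∆ coverStep P x y ⊆ {x, y} := by
    unfold coverStep
    split_ifs
    · simp
    · intro v hv
      simp only [mem_symmDiff, mem_insert_iff, mem_singleton_iff] at hv ⊢
      tauto
  calc (P ∆ coverStep P x y).ncard ≤ ({x, y} : Set V).ncard := ncard_le_ncard hsub
    _ ≤ ({y} : Set V).ncard + 1 := ncard_insert_le _ _
    _ = 2 := by rw [ncard_singleton]

end SymmDiff

lemma mem_iff_of_insert_of_lowerClosed {α β : Type*} [LinearOrder β] {E S : Set α} {f : α → β}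
    (hf : InjOn f E) {a : α} (ha : a ∉ S) (hmax : ∀ x ∈ S, f x ≤ f a) (hE : insert a S ⊆ E)
    (hclosed : ∀ x ∈ insert a S, ∀ x' ∈ E, f x' < f x → x' ∈ insert a S) (x : α) :
    x ∈ S ↔ x ∈ E ∧ f x < f a := by
  refine ⟨fun hx ↦ ⟨hE (mem_insert_of_mem a hx), (hmax x hx).lt_of_ne fun h ↦ ?_⟩, ?_⟩
  · exact ha (hf (hE (mem_insert_of_mem a hx)) (hE (mem_insert a S)) h ▸ hx)
  · rintro ⟨hxE, hlt⟩
    exact (hclosed a (mem_insert a S) x hxE hlt).resolve_left (ne_of_apply_ne f hlt.ne)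

namespace IsGreedyMatching

variable {G : SimpleGraph V} {π : Sym2 V → ℝ} {M : Set (Sym2 V)}

lemma subset_edgeSet (hM : IsGreedyMatching G π M) : M ⊆ G.edgeSet :=
  fun e he ↦ ((hM e).1 he).1

lemma mem_iff (hM : IsGreedyMatching G π M) {e : Sym2 V} :
    e ∈ M ↔ e ∈ G.edgeSet ∧ ∀ v ∈ e, v ∉ coveredVerts {e' ∈ M | π e' < π e} := by
  rw [hM e]
  refine and_congr_right fun _ ↦ ⟨?_, ?_⟩
  · rintro hfree v hv ⟨e', ⟨he'M, hlt⟩, hv'⟩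
    exact hfree e' (hM.subset_edgeSet he'M) ⟨v, hv, hv'⟩ hlt he'M
  · rintro hfree e' - ⟨v, hv, hv'⟩ hlt he'M
    exact hfree v hv ⟨e', ⟨he'M, hlt⟩, hv'⟩

lemma pairwise_disjoint (hM : IsGreedyMatching G π M) (hπ : InjOn π G.edgeSet) :
    M.Pairwise fun e e' ↦ ∀ v ∈ e, v ∉ e' := by
  intro e he e' he' hne v hv hv'
  have hπne : π e ≠ π e' := fun h ↦ hne (hπ (hM.subset_edgeSet he) (hM.subset_edgeSet he') h)
  rcases hπne.lt_or_gt with hlt | hlt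
  · exact ((hM e').1 he').2 e (hM.subset_edgeSet he) ⟨v, hv', hv⟩ hlt he
  · exact ((hM e).1 he).2 e' (hM.subset_edgeSet he') ⟨v, hv, hv'⟩ hlt he'

lemma ncard_coveredVerts [Finite V] (hM : IsGreedyMatching G π M) (hπ : InjOn π G.edgeSet) :
    (coveredVerts M).ncard = 2 * M.ncard :=
  ncard_coveredVerts_of_pairwise (fun _ he ↦ G.not_isDiag_of_mem_edgeSet (hM.subset_edgeSet he))
    (hM.pairwise_disjoint hπ)

lemma inter_insert_of_notMem_edgeSet (hM : IsGreedyMatching G π M) {e : Sym2 V}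
    (he : e ∉ G.edgeSet) (S : Set (Sym2 V)) : M ∩ insert e S = M ∩ S :=
  inter_insert_of_notMem fun h ↦ he (hM.subset_edgeSet h)

lemma coveredVerts_inter_insert (hM : IsGreedyMatching G π M) {S : Set (Sym2 V)} {x y : V}
    (hS : M ∩ S = {e' ∈ M | π e' < π s(x, y)}) (he : s(x, y) ∈ G.edgeSet) :
    coveredVerts (M ∩ insert s(x, y) S) = coverStep (coveredVerts (M ∩ S)) x y := by
  by_cases hm : s(x, y) ∈ M
  · have hfree := (hM.mem_iff.1 hm).2
    rw [inter_insert_of_mem hm, coveredVerts_insert, hS, coverStep,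
      if_neg (not_or.2 ⟨hfree x (Sym2.mem_mk_left x y), hfree y (Sym2.mem_mk_right x y)⟩)]
  · rw [inter_insert_of_notMem hm, hS, coverStep, if_pos]
    by_contra hfree
    rw [not_or] at hfree
    refine hm (hM.mem_iff.2 ⟨he, fun v hv ↦ ?_⟩)
    rcases Sym2.mem_iff.1 hv with rfl | rfl
    exacts [hfree.1, hfree.2]

end IsGreedyMatching

section Sensitivity

variable [Finite V] {G₁ G₂ : SimpleGraph V} {a b : V} {π : Sym2 V → ℝ} {M₁ M₂ : Set (Sym2 V)}

theorem coveredVerts_inter_eq_and_ncard_symmDiff_le (hne : s(a, b) ∉ G₁.edgeSet)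
    (hG₂ : G₂.edgeSet = insert s(a, b) G₁.edgeSet) (hπ : InjOn π G₂.edgeSet)
    (hM₁ : IsGreedyMatching G₁ π M₁) (hM₂ : IsGreedyMatching G₂ π M₂) (S : Finset (Sym2 V))
    (hSE : ↑S ⊆ G₂.edgeSet)
    (hS : ∀ e ∈ (S : Set (Sym2 V)), ∀ e' ∈ G₂.edgeSet, π e' < π e → e' ∈ (S : Set (Sym2 V))) :
    (s(a, b) ∉ S → coveredVerts (M₁ ∩ S) = coveredVerts (M₂ ∩ S)) ∧
      (coveredVerts (M₁ ∩ S) ∆ coveredVerts (M₂ ∩ S)).ncard ≤ 2 := by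
  classical
  induction S using Finset.induction_on_max_value π with
  | empty => simp
  | insert e S heS hmax ih =>
    rw [Finset.coe_insert] at hSE hS ⊢
    have hmem := mem_iff_of_insert_of_lowerClosed hπ heS hmax hSE hS
    obtain ⟨ih_eq, ih_le⟩ := ih (fun e' h ↦ ((hmem e').1 h).1)
      fun e₀ h₀ e' he' hlt ↦ (hmem e').2 ⟨he', hlt.trans ((hmem e₀).1 h₀).2⟩
    have hG : G₁.edgeSet ⊆ G₂.edgeSet := hG₂ ▸ subset_insert _ _
    have hinter : ∀ {M : Set (Sym2 V)}, M ⊆ G₂.edgeSet → M ∩ S = {e' ∈ M | π e' < π e} :=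
      fun hM ↦ by ext e'; simp only [mem_inter_iff, hmem, mem_ofPred_eq]; grind
    induction e using Sym2.ind with | _ x y
    rw [hM₂.coveredVerts_inter_insert (hinter hM₂.subset_edgeSet) (hSE (mem_insert _ _))]
    by_cases he : s(x, y) = s(a, b)
    · rw [hM₁.inter_insert_of_notMem_edgeSet (he ▸ hne), ih_eq (he ▸ heS)]
      exact ⟨fun h ↦ absurd (Finset.mem_insert_self _ _) (he ▸ h),
        ncard_symmDiff_coverStep_self_le _ _ _⟩
    · have he₁ : s(x, y) ∈ G₁.edgeSet := (hG₂ ▸ hSE (mem_insert _ _)).resolve_left he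
      rw [hM₁.coveredVerts_inter_insert (hinter (hM₁.subset_edgeSet.trans hG)) he₁]
      exact ⟨fun h ↦ by rw [ih_eq fun h' ↦ h (Finset.mem_insert_of_mem h')],
        (ncard_symmDiff_coverStep_le _ _ _ _).trans ih_le⟩

theorem ncard_symmDiff_coveredVerts_le_two (hne : s(a, b) ∉ G₁.edgeSet)
    (hG₂ : G₂.edgeSet = insert s(a, b) G₁.edgeSet) (hπ : InjOn π G₂.edgeSet)
    (hM₁ : IsGreedyMatching G₁ π M₁) (hM₂ : IsGreedyMatching G₂ π M₂) :
    (coveredVerts M₁ ∆ coveredVerts M₂).ncard ≤ 2 := by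
  have hE := G₂.edgeSet.toFinite.coe_toFinset
  have hM₁E : M₁ ⊆ G₂.edgeSet := hM₁.subset_edgeSet.trans (hG₂ ▸ subset_insert _ _)
  have key := (coveredVerts_inter_eq_and_ncard_symmDiff_le hne hG₂ hπ hM₁ hM₂
    G₂.edgeSet.toFinite.toFinset hE.subset fun _ _ e' he' _ ↦ hE.symm ▸ he').2
  rwa [hE, inter_eq_left.2 hM₁E, inter_eq_left.2 hM₂.subset_edgeSet] at key

end Sensitivity

end

theorem greedyMatching_card_diff_le_one_general {V : Type*} [Fintype V]
    (G₁ G₂ : SimpleGraph V) (a b : V)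
    (hne : s(a, b) ∉ G₁.edgeSet)
    (hG₂ : G₂.edgeSet = insert s(a, b) G₁.edgeSet)
    (π : Sym2 V → ℝ)
    (hπ : ∀ e₁ e₂ : Sym2 V, ¬e₁.IsDiag → ¬e₂.IsDiag → π e₁ = π e₂ → e₁ = e₂)
    (M₁ M₂ : Set (Sym2 V))
    (hM₁ : IsGreedyMatching G₁ π M₁) (hM₂ : IsGreedyMatching G₂ π M₂) :
    |(M₁.ncard : ℤ) - (M₂.ncard : ℤ)| ≤ 1 := by
  have hπ₂ : InjOn π G₂.edgeSet := fun e₁ h₁ e₂ h₂ ↦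
    hπ e₁ e₂ (G₂.not_isDiag_of_mem_edgeSet h₁) (G₂.not_isDiag_of_mem_edgeSet h₂)
  have hD := ncard_symmDiff_coveredVerts_le_two hne hG₂ hπ₂ hM₁ hM₂
  have h₁ := hM₁.ncard_coveredVerts (hπ₂.mono (hG₂ ▸ subset_insert _ _))
  have h₂ := hM₂.ncard_coveredVerts hπ₂
  have h₁₂ := ncard_le_ncard_add_ncard_symmDiff (coveredVerts M₁) (coveredVerts M₂)
  have h₂₁ := ncard_le_ncard_add_ncard_symmDiff (coveredVerts M₂) (coveredVerts M₁)
  rw [symmDiff_comm] at h₂₁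
  rw [abs_le]
  omega

/-- If `G₂` is obtained from `G₁` by adding a single edge `e* = s(a,b)`, then for every
injective ranking `π` of the unordered pairs of distinct vertices, the sizes of the greedy
matchings of `G₁` and of `G₂` differ by at most `1`. -/
theorem greedyMatching_card_diff_le_one {V : Type*} [Fintype V]
    (G₁ G₂ : SimpleGraph V) (a b : V) (hab : a ≠ b)
    (hne : s(a, b) ∉ G₁.edgeSet)
    (hG₂ : G₂.edgeSet = insert s(a, b) G₁.edgeSet)
    (π : Sym2 V → ℝ)
    (hπ : ∀ e₁ e₂ : Sym2 V, ¬e₁.IsDiag → ¬e₂.IsDiag → π e₁ = π e₂ → e₁ = e₂)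
    (M₁ M₂ : Set (Sym2 V))
    (hM₁ : IsGreedyMatching G₁ π M₁) (hM₂ : IsGreedyMatching G₂ π M₂) :
    |(M₁.ncard : ℤ) - (M₂.ncard : ℤ)| ≤ 1 :=
  greedyMatching_card_diff_le_one_general G₁ G₂ a b hne hG₂ π hπ M₁ M₂ hM₁ hM₂
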